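/- arXiv:2503.23420 — 3 statements merged into one kernel-verified Lean document; each statement's English description precedes it below -/
import Mathlib

section
/- Let F(x) = αx + β with α < 0, β > 0, and α + β > 0, on C = [-1, 1]. Then F is strongly pseudomonotone on C with constant γ = (α+β)/2. -/
/-!
Since `α ≤ 0`, the map `F x = α * x + β` is decreasing, so it is bounded below on `[-1, 1]` by
`F 1 = α + β > 0`. Hence `F x * (y - x) ≥ 0` forces `x ≤ y`, and it remains to bound `F y` below
by `γ * (y - x)` with `γ = (α + β) / 2`, which follows from
`F y - γ * (y - x) = (β - α) * (1 - y) / 2 + γ * (1 + x)`.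
-/

open Set

def StronglyPseudomonotoneOn (F : ℝ → ℝ) (C : Set ℝ) (γ : ℝ) : Prop :=
  ∀ x ∈ C, ∀ y ∈ C, F x * (y - x) ≥ 0 → F y * (y - x) ≥ γ * (y - x) ^ 2

section Affine

variable {α β x y : ℝ}

lemma affine_pos_of_mem_Icc (hα : α ≤ 0) (hab : 0 < α + β) (hx : x ∈ Icc (-1 : ℝ) 1) :
    0 < α * x + β := by
  nlinarith [hx.2]

lemma half_add_mul_sub_le_affine (hαβ : α ≤ β) (hab : 0 ≤ α + β) (hx : x ∈ Icc (-1 : ℝ) 1)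
    (hy : y ∈ Icc (-1 : ℝ) 1) : (α + β) / 2 * (y - x) ≤ α * y + β := by
  have key : α * y + β - (α + β) / 2 * (y - x) = (β - α) * (1 - y) / 2 + (α + β) / 2 * (1 + x) := by
    ring
  have h₁ : 0 ≤ (β - α) * (1 - y) / 2 := by nlinarith [hy.2]
  have h₂ : 0 ≤ (α + β) / 2 * (1 + x) := by nlinarith [hx.1]
  linarith

theorem stronglyPseudomonotoneOn_affine_Icc (hα : α ≤ 0) (hab : 0 < α + β) :
    StronglyPseudomonotoneOn (fun x ↦ α * x + β) (Icc (-1) 1) ((α + β) / 2) := by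
  intro x hx y hy h
  have hxy : 0 ≤ y - x := nonneg_of_mul_nonneg_right h (affine_pos_of_mem_Icc hα hab hx)
  calc (α + β) / 2 * (y - x) ^ 2 = (α + β) / 2 * (y - x) * (y - x) := by ring
    _ ≤ (α * y + β) * (y - x) :=
      mul_le_mul_of_nonneg_right (half_add_mul_sub_le_affine (by linarith) hab.le hx hy) hxy

end Affine

theorem stmt_3_general (α β : ℝ) (hα : α < 0) (hab : α + β > 0) :
    ∀ x ∈ Set.Icc (-1:ℝ) 1, ∀ y ∈ Set.Icc (-1:ℝ) 1,
      (α * x + β) * (y - x) ≥ 0 →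
      (α * y + β) * (y - x) ≥ ((α + β) / 2) * (y - x)^2 :=
  stronglyPseudomonotoneOn_affine_Icc hα.le hab

theorem stmt_3 (α β : ℝ) (hα : α < 0) (hβ : 0 < β) (hab : α + β > 0) :
    ∀ x ∈ Set.Icc (-1:ℝ) 1, ∀ y ∈ Set.Icc (-1:ℝ) 1,
      (α * x + β) * (y - x) ≥ 0 →
      (α * y + β) * (y - x) ≥ ((α + β) / 2) * (y - x)^2 :=
  stmt_3_general α β hα hab
end

section
/- Let F(x) = αx + β with α < 0, β < 0, and α > β, on C = [-1, 1]. Then F is strongly pseudomonotone on C with constant γ = (α-β)/2. -/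
/-!
On `[-1, 1]` the map `F x = α x + β` is negative (its largest value is `β - α < 0`), so the premise
`F x * (y - x) ≥ 0` forces `y ≤ x`. Then `-F y ≥ α - β` and `0 ≤ x - y ≤ 2` give
`F y * (y - x) = -F y * (x - y) ≥ (α - β) (x - y) ≥ (α - β) / 2 * (x - y) ^ 2`.
-/

section AffineOnSymmetricInterval

variable {α β : ℝ}

lemma sub_le_neg_affine_of_neg_one_le (hα : α ≤ 0) {y : ℝ} (hy : -1 ≤ y) :
    α - β ≤ -(α * y + β) := by
  nlinarith

lemma affine_neg_of_mem_Icc (hα : α ≤ 0) (hab : β < α) {x : ℝ} (hx : x ∈ Set.Icc (-1 : ℝ) 1) :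
    α * x + β < 0 := by
  nlinarith [hx.1]

end AffineOnSymmetricInterval

lemma half_mul_sq_le_mul {c d : ℝ} (hc : 0 ≤ c) (hd₀ : 0 ≤ d) (hd₂ : d ≤ 2) :
    c / 2 * d ^ 2 ≤ c * d := by
  nlinarith [mul_nonneg hc (mul_nonneg hd₀ (sub_nonneg.2 hd₂))]

theorem stmt_4_general (α β : ℝ) (hα : α < 0) (hab : α > β) :
    ∀ x ∈ Set.Icc (-1:ℝ) 1, ∀ y ∈ Set.Icc (-1:ℝ) 1,
      (α * x + β) * (y - x) ≥ 0 →
      (α * y + β) * (y - x) ≥ ((α - β) / 2) * (y - x)^2 := by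
  intro x hx y hy h
  have hyx : y - x ≤ 0 := nonpos_of_mul_nonneg_right h (affine_neg_of_mem_Icc hα.le hab hx)
  have hgap : α - β ≤ -(α * y + β) := sub_le_neg_affine_of_neg_one_le hα.le hy.1
  calc (α - β) / 2 * (y - x) ^ 2 = (α - β) / 2 * (x - y) ^ 2 := by ring
    _ ≤ (α - β) * (x - y) := half_mul_sq_le_mul (by linarith) (by linarith) (by linarith [hx.2, hy.1])
    _ ≤ -(α * y + β) * (x - y) := mul_le_mul_of_nonneg_right hgap (by linarith)
    _ = (α * y + β) * (y - x) := by ring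

theorem stmt_4 (α β : ℝ) (hα : α < 0) (hβ : β < 0) (hab : α > β) :
    ∀ x ∈ Set.Icc (-1:ℝ) 1, ∀ y ∈ Set.Icc (-1:ℝ) 1,
      (α * x + β) * (y - x) ≥ 0 →
      (α * y + β) * (y - x) ≥ ((α - β) / 2) * (y - x)^2 :=
  stmt_4_general α β hα hab
end

section
/- Let α ≠ 0, β ∈ ℝ, ρ > 0, η > 0, x⁰ ∈ [-1,1], and suppose the function x(t) = (x⁰ + β/α)e^{-αt/(ηρ)} - β/α satisfies β - ρ ≤ (ρ-α)x(t) ≤ β + ρ for all t ≥ 0, where ρ - α > 0. Then -1 ≤ -β/α ≤ 1 and x(t) → -β/α as t → ∞; moreover, -β/α is a KKT point of min{(1/2)αx² + βx : x ∈ [-1,1]}. -/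
private lemma aux_neg (D R t : ℝ) (hD : D < 0) (ht : R / D + 1 ≤ t) :
    D * t ≤ R + D := by
  have h := mul_le_mul_of_nonpos_left ht (le_of_lt hD)
  rwa [mul_add, mul_div_cancel₀ _ (ne_of_lt hD), mul_one] at h

private lemma aux_pos (D R t : ℝ) (hD : 0 < D) (ht : R / D + 1 ≤ t) :
    R + D ≤ D * t := by
  have h := mul_le_mul_of_nonneg_left ht (le_of_lt hD)
  rwa [mul_add, mul_div_cancel₀ _ (ne_of_gt hD), mul_one] at h

theorem stmt_19 (α β ρ η x0 : ℝ) (hα : α ≠ 0) (hρ : 0 < ρ) (hη : 0 < η)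
    (hρα : 0 < ρ - α) (hx0 : x0 ∈ Set.Icc (-1:ℝ) 1)
    (hbound : ∀ t ≥ (0:ℝ),
      β - ρ ≤ (ρ - α) * ((x0 + β/α) * Real.exp (-α * t / (η * ρ)) - β/α) ∧
      (ρ - α) * ((x0 + β/α) * Real.exp (-α * t / (η * ρ)) - β/α) ≤ β + ρ) :
    (-1 ≤ -β/α ∧ -β/α ≤ 1) ∧
    Filter.Tendsto (fun t => (x0 + β/α) * Real.exp (-α * t / (η * ρ)) - β/α)
      Filter.atTop (nhds (-β/α)) ∧
    ∀ y ∈ Set.Icc (-1:ℝ) 1, (α * (-β/α) + β) * (y - (-β/α)) ≥ 0 := by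
  have hkkt : ∀ y ∈ Set.Icc (-1:ℝ) 1, (α * (-β/α) + β) * (y - (-β/α)) ≥ 0 := by
    intro y hy
    have : α * (-β/α) + β = 0 := by field_simp; ring
    simp [this]
  have hηρ : 0 < η * ρ := mul_pos hη hρ
  have hab : α * (β/α) = β := mul_div_cancel₀ β hα
  have hnd : -β/α = -(β/α) := by ring
  rcases lt_or_gt_of_ne hα with hneg | hpos
  · -- α < 0
    by_cases hc : x0 + β/α = 0
    · have hx : -β/α = x0 := by rw [hnd]; linarith
      refine ⟨⟨by rw [hx]; exact hx0.1, by rw [hx]; exact hx0.2⟩, ?_, hkkt⟩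
      have heq : (fun t : ℝ => (x0 + β/α) * Real.exp (-α * t / (η * ρ)) - β/α)
          = fun _ : ℝ => -β/α := by
        funext t; rw [hc]; ring
      rw [heq]; exact tendsto_const_nhds
    · exfalso
      obtain ⟨k, hkeq⟩ : ∃ k : ℝ, k = -α / (η * ρ) := ⟨_, rfl⟩
      have hk : 0 < k := hkeq ▸ div_pos (by linarith) hηρ
      obtain ⟨c, hceq⟩ : ∃ c : ℝ, c = x0 + β/α := ⟨_, rfl⟩
      have hc' : c ≠ 0 := hceq ▸ hc
      have harg : ∀ t : ℝ, -α * t / (η * ρ) = k * t := by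
        intro t; rw [hkeq]; ring
      have hbound' : ∀ t ≥ (0:ℝ),
          β - ρ ≤ (ρ - α) * (c * Real.exp (k * t) - β/α) ∧
          (ρ - α) * (c * Real.exp (k * t) - β/α) ≤ β + ρ := by
        intro t ht
        have := hbound t ht
        rwa [harg t, ← hceq] at this
      rcases lt_or_gt_of_ne hc' with hcn | hcp
      · -- c < 0 : lower bound violated for large t
        set R := (β - ρ - (ρ - α) * (c - β/α)) with hR
        set D := (ρ - α) * c * k with hDdef
        have hD : D < 0 := by
          have h1 : 0 < (ρ - α) * k := mul_pos hρα hk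
          rw [hDdef]; nlinarith
        set t := max 0 (R / D + 1) with ht
        have ht0 : (0:ℝ) ≤ t := le_max_left _ _
        have hb := (hbound' t ht0).1
        have hexp : k * t + 1 ≤ Real.exp (k * t) := Real.add_one_le_exp _
        have hmul : D * t ≤ R + D := aux_neg D R t hD (le_max_right _ _)
        have hcc : (ρ - α) * c < 0 := by nlinarith
        have hexp' : (ρ - α) * c * Real.exp (k * t) ≤ (ρ - α) * c * (k * t + 1) := by
          nlinarith
        rw [hR] at hmul
        rw [hDdef] at hmul
        nlinarith
      · -- c > 0 : upper bound violated for large t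
        set R := (β + ρ - (ρ - α) * (c - β/α)) with hR
        set D := (ρ - α) * c * k with hDdef
        have hD : 0 < D := by rw [hDdef]; positivity
        set t := max 0 (R / D + 1) with ht
        have ht0 : (0:ℝ) ≤ t := le_max_left _ _
        have hb := (hbound' t ht0).2
        have hexp : k * t + 1 ≤ Real.exp (k * t) := Real.add_one_le_exp _
        have hmul : R + D ≤ D * t := aux_pos D R t hD (le_max_right _ _)
        have hcc : 0 < (ρ - α) * c := mul_pos hρα hcp
        have hexp' : (ρ - α) * c * (k * t + 1) ≤ (ρ - α) * c * Real.exp (k * t) := by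
          nlinarith
        rw [hR] at hmul
        rw [hDdef] at hmul
        nlinarith
  · -- α > 0
    have hlim : Filter.Tendsto (fun t : ℝ => Real.exp (-α * t / (η * ρ)))
        Filter.atTop (nhds 0) := by
      apply Real.tendsto_exp_atBot.comp
      have heq2 : (fun t : ℝ => -α * t / (η * ρ)) = fun t : ℝ => (-α / (η * ρ)) * t := by
        funext t; ring
      rw [heq2]
      apply Filter.Tendsto.const_mul_atTop_of_neg
      · exact div_neg_of_neg_of_pos (by linarith) hηρ
      · exact Filter.tendsto_id
    have hmain : Filter.Tendsto
        (fun t => (x0 + β/α) * Real.exp (-α * t / (η * ρ)) - β/α)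
        Filter.atTop (nhds (-β/α)) := by
      have := (hlim.const_mul (x0 + β/α)).sub_const (β/α)
      simpa [neg_div] using this
    have hL : Filter.Tendsto
        (fun t => (ρ - α) * ((x0 + β/α) * Real.exp (-α * t / (η * ρ)) - β/α))
        Filter.atTop (nhds ((ρ - α) * (-β/α))) := hmain.const_mul _
    have h1 : β - ρ ≤ (ρ - α) * (-β/α) :=
      ge_of_tendsto hL (Filter.eventually_atTop.2 ⟨0, fun t ht => (hbound t ht).1⟩)
    have h2 : (ρ - α) * (-β/α) ≤ β + ρ :=
      le_of_tendsto hL (Filter.eventually_atTop.2 ⟨0, fun t ht => (hbound t ht).2⟩)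
    have hprod : α * ((ρ - α) * (-β/α)) = -(ρ - α) * β := by
      field_simp
    refine ⟨⟨?_, ?_⟩, hmain, hkkt⟩
    · have h1' : α * (β - ρ) ≤ α * ((ρ - α) * (-β/α)) :=
        mul_le_mul_of_nonneg_left h1 (le_of_lt hpos)
      rw [hprod] at h1'
      have hβα : β ≤ α := by nlinarith
      have hdiv : β/α ≤ 1 := by rw [div_le_one hpos]; exact hβα
      rw [hnd]; linarith
    · have h2' : α * ((ρ - α) * (-β/α)) ≤ α * (β + ρ) :=
        mul_le_mul_of_nonneg_left h2 (le_of_lt hpos)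
      rw [hprod] at h2'
      have hβα : -α ≤ β := by nlinarith
      have hdiv : -1 ≤ β/α := by rw [le_div_iff₀ hpos]; linarith
      rw [hnd]; linarith
end
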